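/- Let n ≥ 1 be an integer and define h(s) := 1/2 + √(s(1−s)) for s ∈ [0,1]. Then for any s₀, s₁ ∈ [1/2, 1], h(s₀)·h(s₁) ≤ h(√(s₀·s₁))², i.e. at fixed product of the vacuum components, the product of the two parties' optimal discrimination probabilities is maximized when the vacuum components are equal. More generally, for s : Fin n → [1/2, 1] with geometric mean t = (Π_i s_i)^{1/n}, one has Π_i h(s_i) ≤ h(t)^n. -/
import Mathlib


open Finset

/-- `h(s) = 1/2 + √(s(1−s))`, the optimal probability of discriminating two pure states
with vacuum component `s`. -/
noncomputable def hdisc (s : ℝ) : ℝ := 1 / 2 + Real.sqrt (s * (1 - s))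

lemma hdisc_nonneg (s : ℝ) : 0 ≤ hdisc s := by
  unfold hdisc
  have := Real.sqrt_nonneg (s * (1 - s))
  linarith

/-- `hdisc` is antitone on `[1/2, 1]`. -/
lemma hdisc_anti {a b : ℝ} (ha : 1 / 2 ≤ a) (hab : a ≤ b) (hb : b ≤ 1) :
    hdisc b ≤ hdisc a := by
  unfold hdisc
  have h1 : b * (1 - b) ≤ a * (1 - a) := by nlinarith
  have := Real.sqrt_le_sqrt h1
  linarith

/-- `hdisc` is concave on `[0, 1]`. -/
lemma hdisc_concave : ConcaveOn ℝ (Set.Icc (0 : ℝ) 1) hdisc := by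
  refine ⟨convex_Icc _ _, ?_⟩
  rintro x ⟨hx0, hx1⟩ y ⟨hy0, hy1⟩ a b ha hb hab
  simp only [smul_eq_mul, hdisc]
  set p := Real.sqrt (x * (1 - x)) with hp
  set q := Real.sqrt (y * (1 - y)) with hq
  have hpn : 0 ≤ p := Real.sqrt_nonneg _
  have hqn : 0 ≤ q := Real.sqrt_nonneg _
  have hp2 : p ^ 2 = x * (1 - x) := Real.sq_sqrt (by nlinarith)
  have hq2 : q ^ 2 = y * (1 - y) := Real.sq_sqrt (by nlinarith)
  have hb' : b = 1 - a := by linarith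
  subst hb'
  have key : a * p + (1 - a) * q ≤
      Real.sqrt ((a * x + (1 - a) * y) * (1 - (a * x + (1 - a) * y))) := by
    apply Real.le_sqrt_of_sq_le
    nlinarith [mul_nonneg (mul_nonneg ha hb) (sq_nonneg (p - q)),
      mul_nonneg (mul_nonneg ha hb) (sq_nonneg (x - y))]
  nlinarith

theorem equal_vacuum_components_optimal (n : ℕ) (hn : 1 ≤ n) :
    -- two-party case: at fixed product of vacuum components, equal split is optimal
    (∀ s0 s1 : ℝ, s0 ∈ Set.Icc (1 / 2 : ℝ) 1 → s1 ∈ Set.Icc (1 / 2 : ℝ) 1 →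
      hdisc s0 * hdisc s1 ≤ hdisc (Real.sqrt (s0 * s1)) ^ 2) ∧
    -- n-party case: the geometric-mean split dominates
    (∀ s : Fin n → ℝ, (∀ i, s i ∈ Set.Icc (1 / 2 : ℝ) 1) →
      ∏ i, hdisc (s i) ≤ hdisc ((∏ i, s i) ^ ((n : ℝ)⁻¹)) ^ n) := by
  constructor
  · -- two-party case
    rintro s0 s1 ⟨h00, h01⟩ ⟨h10, h11⟩
    set t := Real.sqrt (s0 * s1) with ht
    have htn : 0 ≤ t := Real.sqrt_nonneg _
    have ht2 : t ^ 2 = s0 * s1 := Real.sq_sqrt (by nlinarith)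
    -- t ∈ [1/2, (s0+s1)/2]
    have ht_half : (1 / 2 : ℝ) ≤ t := by
      rw [ht, Real.le_sqrt (by norm_num) (by nlinarith)]
      nlinarith
    have ht_le : t ≤ (s0 + s1) / 2 := by
      have : Real.sqrt (s0 * s1) ≤ Real.sqrt (((s0 + s1) / 2) ^ 2) :=
        Real.sqrt_le_sqrt (by nlinarith [sq_nonneg (s0 - s1)])
      rwa [Real.sqrt_sq (by linarith)] at this
    have hmid_le : (s0 + s1) / 2 ≤ 1 := by linarith
    -- concavity at the midpoint
    have hm0 : s0 ∈ Set.Icc (0:ℝ) 1 := ⟨by linarith, h01⟩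
    have hm1 : s1 ∈ Set.Icc (0:ℝ) 1 := ⟨by linarith, h11⟩
    have h05 : (0:ℝ) ≤ 1 / 2 := by norm_num
    have hsum : (1:ℝ) / 2 + 1 / 2 = 1 := by norm_num
    have hconc := hdisc_concave.2 hm0 hm1 h05 h05 hsum
    simp only [smul_eq_mul] at hconc
    have hmono : hdisc ((1 : ℝ) / 2 * s0 + 1 / 2 * s1) ≤ hdisc t := by
      have : (1 : ℝ) / 2 * s0 + 1 / 2 * s1 = (s0 + s1) / 2 := by ring
      rw [this]
      exact hdisc_anti ht_half ht_le hmid_le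
    have hAM : hdisc s0 * hdisc s1 ≤ (1 / 2 * hdisc s0 + 1 / 2 * hdisc s1) ^ 2 := by
      nlinarith [sq_nonneg (hdisc s0 - hdisc s1)]
    calc hdisc s0 * hdisc s1 ≤ (1 / 2 * hdisc s0 + 1 / 2 * hdisc s1) ^ 2 := hAM
      _ ≤ hdisc t ^ 2 := by
          apply pow_le_pow_left₀
          · have := hdisc_nonneg s0; have := hdisc_nonneg s1; linarith
          · exact hconc.trans hmono
  · -- n-party case
    intro s hs
    have hnR : (0 : ℝ) < n := by exact_mod_cast hn
    have hw : ∑ _i : Fin n, (n : ℝ)⁻¹ = 1 := by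
      simp [Finset.card_univ, mul_inv_cancel₀ hnR.ne']
    have hs0 : ∀ i, (0 : ℝ) ≤ s i := fun i => le_trans (by norm_num) (hs i).1
    have hh0 : ∀ i, (0 : ℝ) ≤ hdisc (s i) := fun i => hdisc_nonneg _
    set P := ∏ i, s i with hP
    have hP0 : 0 ≤ P := Finset.prod_nonneg fun i _ => hs0 i
    set G := P ^ ((n : ℝ)⁻¹) with hG
    have hG0 : 0 ≤ G := Real.rpow_nonneg hP0 _
    set A := ∑ i, (n : ℝ)⁻¹ * s i with hA
    set M := ∑ i, (n : ℝ)⁻¹ * hdisc (s i) with hM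
    -- Step 1: AM-GM for the hdisc values
    have step1 : ∏ i, hdisc (s i) ≤ M ^ n := by
      have hgm := Real.geom_mean_le_arith_mean_weighted Finset.univ
        (fun _ => (n : ℝ)⁻¹) (fun i => hdisc (s i))
        (fun i _ => by positivity) hw (fun i _ => hh0 i)
      have hprod : ∏ i, hdisc (s i) ^ ((n : ℝ)⁻¹) = (∏ i, hdisc (s i)) ^ ((n : ℝ)⁻¹) :=
        Real.finset_prod_rpow _ _ (fun i _ => hh0 i) _
      have hHP0 : 0 ≤ ∏ i, hdisc (s i) := Finset.prod_nonneg fun i _ => hh0 i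
      have hbase : ((∏ i, hdisc (s i)) ^ ((n : ℝ)⁻¹)) ^ n = ∏ i, hdisc (s i) := by
        rw [← Real.rpow_natCast ((∏ i, hdisc (s i)) ^ ((n : ℝ)⁻¹)) n,
          ← Real.rpow_mul hHP0, inv_mul_cancel₀ hnR.ne', Real.rpow_one]
      calc ∏ i, hdisc (s i) = ((∏ i, hdisc (s i)) ^ ((n : ℝ)⁻¹)) ^ n := hbase.symm
        _ ≤ M ^ n := by
            apply pow_le_pow_left₀ (Real.rpow_nonneg hHP0 _)
            rw [← hprod]; exact hgm
    -- Step 2: Jensen for hdisc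
    have step2 : M ≤ hdisc A := by
      have := hdisc_concave.le_map_sum (t := Finset.univ) (w := fun _ => (n : ℝ)⁻¹)
        (p := s) (fun i _ => by positivity) hw
        (fun i _ => ⟨hs0 i, (hs i).2⟩)
      simpa [smul_eq_mul] using this
    -- Step 3: G ≤ A
    have step3 : G ≤ A := by
      have hgm := Real.geom_mean_le_arith_mean_weighted Finset.univ
        (fun _ => (n : ℝ)⁻¹) s (fun i _ => by positivity) hw (fun i _ => hs0 i)
      have hprod : ∏ i, (s i) ^ ((n : ℝ)⁻¹) = P ^ ((n : ℝ)⁻¹) :=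
        Real.finset_prod_rpow _ _ (fun i _ => hs0 i) _
      rw [hG, ← hprod]; exact hgm
    -- Step 4: bounds
    have hG_half : (1 / 2 : ℝ) ≤ G := by
      have hle : ((1 : ℝ) / 2) ^ (n : ℕ) ≤ P :=
        Finset.prod_le_prod (fun i _ => by norm_num) (fun i _ => (hs i).1)
          |>.trans_eq' (by simp [Finset.prod_const, Finset.card_univ])
      have h1 : (((1 : ℝ) / 2) ^ (n : ℕ)) ^ ((n : ℝ)⁻¹) ≤ G :=
        Real.rpow_le_rpow (by positivity) hle (by positivity)
      have h2 : (((1 : ℝ) / 2) ^ (n : ℕ)) ^ ((n : ℝ)⁻¹) = 1 / 2 := by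
        rw [← Real.rpow_natCast ((1 : ℝ) / 2) n, ← Real.rpow_mul (by norm_num),
          mul_inv_cancel₀ hnR.ne', Real.rpow_one]
      linarith
    have hA_le : A ≤ 1 := by
      calc A ≤ ∑ _i : Fin n, (n : ℝ)⁻¹ * 1 := by
              apply Finset.sum_le_sum
              intro i _
              exact mul_le_mul_of_nonneg_left (hs i).2 (by positivity)
        _ = 1 := by simpa using hw
    -- Step 5: combine
    have step5 : hdisc A ≤ hdisc G := hdisc_anti hG_half step3 hA_le
    calc ∏ i, hdisc (s i) ≤ M ^ n := step1
      _ ≤ hdisc G ^ n := by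
          apply pow_le_pow_left₀
          · exact Finset.sum_nonneg fun i _ => mul_nonneg (by positivity) (hh0 i)
          · exact step2.trans step5
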